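/- arXiv:2408.11177 — 2 statements merged into one kernel-verified Lean document; each statement's English description precedes it below -/
import Mathlib

section
/- Assume J̄ < ∞ and let ν > 0. Then I_ν = 0 if and only if the Gagliardo–Nirenberg-type inequality Σ_n |q_n|^{p+1} ≤ ((p+1)/2) ν^{−(p−1)/2} M[q]^{(p−1)/2} ⟨Lq,q⟩ holds for every q ∈ ℓ²(Z^d). -/
open scoped BigOperators
open Filter Topology

noncomputable section

/-- The `ℓ^∞` norm of a lattice point of `ℤ^d`, as a natural number. -/
def latNorm {d : ℕ} (m : Fin d → ℤ) : ℕ := Finset.univ.sup fun i => (m i).natAbs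

/-- The summand `J_{|m|}` for `m ≠ 0` (and `0` for `m = 0`). -/
def JbarSummand (d : ℕ) (J : ℕ → ℝ) (m : Fin d → ℤ) : ℝ :=
  if m = 0 then 0 else J (latNorm m)

/-- `J̄ = Σ_{m ≠ 0} J_{|m|}`. -/
def Jbar (d : ℕ) (J : ℕ → ℝ) : ℝ := ∑' m : Fin d → ℤ, JbarSummand d J m

/-- The quadratic form `⟨Lu,u⟩ = (1/2) Σ_n Σ_{m ≠ n} J_{|n-m|} |u_n - u_m|²`. -/
def pairing (d : ℕ) (J : ℕ → ℝ) (u : (Fin d → ℤ) → ℂ) : ℝ :=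
  (1/2) * ∑' n : Fin d → ℤ, ∑' m : Fin d → ℤ,
    if m = n then 0 else J (latNorm (n - m)) * ‖u n - u m‖ ^ 2

/-- The mass `M[u] = Σ_n |u_n|²`. -/
def mass (d : ℕ) (u : (Fin d → ℤ) → ℂ) : ℝ := ∑' n : Fin d → ℤ, ‖u n‖ ^ 2

/-- Membership in `ℓ²(ℤ^d)`. -/
def MemL2 (d : ℕ) (u : (Fin d → ℤ) → ℂ) : Prop := Summable fun n : Fin d → ℤ => ‖u n‖ ^ 2

/-- The potential term `Σ_n |u_n|^{p+1}`. -/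
def ppot (d : ℕ) (p : ℝ) (u : (Fin d → ℤ) → ℂ) : ℝ := ∑' n : Fin d → ℤ, ‖u n‖ ^ (p + 1)

/-- The energy `H[u] = (1/2)⟨Lu,u⟩ - (1/(p+1)) Σ_n |u_n|^{p+1}`. -/
def energy (d : ℕ) (J : ℕ → ℝ) (p : ℝ) (u : (Fin d → ℤ) → ℂ) : ℝ :=
  (1/2) * pairing d J u - (1/(p+1)) * ppot d p u

/-- `I_ν = inf {H[q] : q ∈ ℓ², M[q] = ν}`. -/
def Ifun (d : ℕ) (J : ℕ → ℝ) (p : ℝ) (ν : ℝ) : ℝ :=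
  sInf {x : ℝ | ∃ q, MemL2 d q ∧ mass d q = ν ∧ energy d J p q = x}

/-!
The Gagliardo–Nirenberg inequality is invariant under `q ↦ c • q` (`c > 0`), so it suffices to
check it at mass `ν`, where it says exactly `H[q] ≥ 0`; hence it is equivalent to `I_ν ≥ 0`.
On the other hand `I_ν ≤ 0` always: the constant state of mass `ν` on the cube `[0, L)^d` has
`⟨Lq, q⟩ = ν Σ_v J_{|v|} · #{n ∈ cube : n - v ∉ cube} / L^d`, and this tends to `0` as `L → ∞`
by dominated convergence, because the fraction of the cube leaving it under a fixed translation
vanishes.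
-/

section Basic

variable {d : ℕ} {J : ℕ → ℝ} {p : ℝ}

lemma latNorm_neg (v : Fin d → ℤ) : latNorm (-v) = latNorm v := by
  simp [latNorm]

lemma natAbs_le_latNorm (v : Fin d → ℤ) (i : Fin d) : (v i).natAbs ≤ latNorm v :=
  Finset.le_sup (f := fun i => (v i).natAbs) (Finset.mem_univ i)

lemma jbarSummand_nonneg (hJ : ∀ k, 0 ≤ J k) (v : Fin d → ℤ) : 0 ≤ JbarSummand d J v := by
  unfold JbarSummand
  split_ifs
  exacts [le_rfl, hJ _]

lemma jbarSummand_sub_comm (n m : Fin d → ℤ) :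
    JbarSummand d J (n - m) = JbarSummand d J (m - n) := by
  rw [← neg_sub]
  simp only [JbarSummand, neg_eq_zero, latNorm_neg]

lemma pairing_eq_tsum_jbarSummand (u : (Fin d → ℤ) → ℂ) :
    pairing d J u = 1 / 2 * ∑' n, ∑' m, JbarSummand d J (n - m) * ‖u n - u m‖ ^ 2 := by
  refine congrArg _ (tsum_congr fun n => tsum_congr fun m => ?_)
  by_cases h : m = n <;> simp [JbarSummand, h, sub_eq_zero, Ne.symm]

lemma pairing_nonneg (hJ : ∀ k, 0 ≤ J k) (u : (Fin d → ℤ) → ℂ) : 0 ≤ pairing d J u := by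
  rw [pairing_eq_tsum_jbarSummand]
  exact mul_nonneg (by norm_num) (tsum_nonneg fun n => tsum_nonneg fun m =>
    mul_nonneg (jbarSummand_nonneg hJ _) (sq_nonneg _))

lemma ppot_nonneg (u : (Fin d → ℤ) → ℂ) : 0 ≤ ppot d p u :=
  tsum_nonneg fun _ => Real.rpow_nonneg (norm_nonneg _) _

lemma mass_nonneg (u : (Fin d → ℤ) → ℂ) : 0 ≤ mass d u :=
  tsum_nonneg fun _ => sq_nonneg _

lemma norm_sq_le_mass {q : (Fin d → ℤ) → ℂ} (hq : MemL2 d q) (n : Fin d → ℤ) :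
    ‖q n‖ ^ 2 ≤ mass d q :=
  hq.le_tsum n fun _ _ => sq_nonneg _

lemma ppot_le_mass_rpow_mul_mass (hp : 1 ≤ p) {q : (Fin d → ℤ) → ℂ} (hq : MemL2 d q) :
    ppot d p q ≤ mass d q ^ ((p - 1) / 2) * mass d q := by
  have hterm : ∀ n, ‖q n‖ ^ (p + 1) ≤ mass d q ^ ((p - 1) / 2) * ‖q n‖ ^ 2 := fun n => by
    have hsplit : ‖q n‖ ^ (p + 1) = (‖q n‖ ^ 2) ^ ((p - 1) / 2) * ‖q n‖ ^ 2 := by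
      rw [← Real.rpow_natCast, ← Real.rpow_mul (norm_nonneg _), ← Real.rpow_add' (norm_nonneg _)]
      · congr 1; push_cast; ring
      · push_cast; linarith
    rw [hsplit]
    exact mul_le_mul_of_nonneg_right
      (Real.rpow_le_rpow (sq_nonneg _) (norm_sq_le_mass hq n) (by linarith)) (sq_nonneg _)
  have hsum : Summable fun n => mass d q ^ ((p - 1) / 2) * ‖q n‖ ^ 2 := hq.mul_left _
  calc ppot d p q ≤ ∑' n, mass d q ^ ((p - 1) / 2) * ‖q n‖ ^ 2 :=
        (Summable.of_nonneg_of_le (fun _ => Real.rpow_nonneg (norm_nonneg _) _) hterm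
          hsum).tsum_le_tsum hterm hsum
    _ = mass d q ^ ((p - 1) / 2) * mass d q := tsum_mul_left

lemma mass_smul (c : ℝ) (q : (Fin d → ℤ) → ℂ) : mass d (c • q) = c ^ 2 * mass d q := by
  simp only [mass, Pi.smul_apply, norm_smul, mul_pow, Real.norm_eq_abs, sq_abs, tsum_mul_left]

lemma memL2_smul (c : ℝ) {q : (Fin d → ℤ) → ℂ} (hq : MemL2 d q) : MemL2 d (c • q) := by
  simpa only [MemL2, Pi.smul_apply, norm_smul, mul_pow, Real.norm_eq_abs, sq_abs] using
    hq.mul_left (c ^ 2)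

lemma ppot_smul {c : ℝ} (hc : 0 ≤ c) (q : (Fin d → ℤ) → ℂ) :
    ppot d p (c • q) = c ^ (p + 1) * ppot d p q := by
  simp only [ppot, Pi.smul_apply, norm_smul, Real.norm_eq_abs, abs_of_nonneg hc,
    Real.mul_rpow hc (norm_nonneg _), tsum_mul_left]

lemma pairing_smul (c : ℝ) (q : (Fin d → ℤ) → ℂ) :
    pairing d J (c • q) = c ^ 2 * pairing d J q := by
  simp only [pairing_eq_tsum_jbarSummand, Pi.smul_apply, ← smul_sub, norm_smul, mul_pow,
    Real.norm_eq_abs, sq_abs, mul_left_comm _ (c ^ 2), tsum_mul_left]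

end Basic

def GagliardoNirenberg (d : ℕ) (J : ℕ → ℝ) (p ν : ℝ) (q : (Fin d → ℤ) → ℂ) : Prop :=
  ppot d p q ≤ ((p + 1) / 2) * ν ^ (-(p - 1) / 2) * (mass d q) ^ ((p - 1) / 2) * pairing d J q

section Scaling

variable {d : ℕ} {J : ℕ → ℝ} {p ν : ℝ}

lemma gagliardoNirenberg_smul_iff {c : ℝ} (hc : 0 < c) (q : (Fin d → ℤ) → ℂ) :
    GagliardoNirenberg d J p ν (c • q) ↔ GagliardoNirenberg d J p ν q := by
  have hmass : mass d (c • q) ^ ((p - 1) / 2) = c ^ (p - 1) * mass d q ^ ((p - 1) / 2) := by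
    rw [mass_smul, Real.mul_rpow (sq_nonneg c) (mass_nonneg q), ← Real.rpow_natCast,
      ← Real.rpow_mul hc.le]
    ring_nf
  have hpow : c ^ (p + 1) = c ^ (p - 1) * c ^ 2 := by
    rw [← Real.rpow_natCast, ← Real.rpow_add hc]
    ring_nf
  unfold GagliardoNirenberg
  rw [ppot_smul hc.le, pairing_smul, hmass, hpow, ← mul_le_mul_iff_of_pos_left
    (by positivity : 0 < c ^ (p - 1) * c ^ 2) (b := ppot d p q)]
  ring_nf

lemma gagliardoNirenberg_of_mass_eq_zero (hp : 1 < p) {q : (Fin d → ℤ) → ℂ} (hq : MemL2 d q)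
    (h0 : mass d q = 0) : GagliardoNirenberg d J p ν q := by
  have hppot := ppot_le_mass_rpow_mul_mass hp.le hq
  rw [h0, mul_zero] at hppot
  rwa [GagliardoNirenberg, h0, Real.zero_rpow (by linarith), mul_zero, zero_mul]

lemma energy_le_half_pairing (hp : 0 < p + 1) (u : (Fin d → ℤ) → ℂ) :
    energy d J p u ≤ 1 / 2 * pairing d J u :=
  sub_le_self _ (mul_nonneg (by positivity) (ppot_nonneg u))

lemma gagliardoNirenberg_iff_energy_nonneg (hν : 0 < ν) (hp : 0 < p + 1)
    {q : (Fin d → ℤ) → ℂ} (hmass : mass d q = ν) :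
    GagliardoNirenberg d J p ν q ↔ 0 ≤ energy d J p q := by
  have hν_pow : ν ^ (-(p - 1) / 2) * ν ^ ((p - 1) / 2) = 1 := by
    rw [← Real.rpow_add hν, neg_div, neg_add_cancel, Real.rpow_zero]
  rw [GagliardoNirenberg, hmass, mul_assoc ((p + 1) / 2), hν_pow, mul_one, energy, sub_nonneg,
    ← mul_le_mul_iff_of_pos_left hp]
  field_simp

lemma energy_bddBelow (hp : 1 ≤ p) (hJ : ∀ k, 0 ≤ J k) (ν : ℝ) :
    BddBelow {x | ∃ q, MemL2 d q ∧ mass d q = ν ∧ energy d J p q = x} := by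
  refine ⟨-(1 / (p + 1)) * (ν ^ ((p - 1) / 2) * ν), ?_⟩
  rintro _ ⟨q, hq, rfl, rfl⟩
  have hppot := ppot_le_mass_rpow_mul_mass hp hq
  have hpairing := pairing_nonneg hJ q
  have hp' : 0 < 1 / (p + 1) := by positivity
  rw [energy]
  nlinarith

end Scaling

open scoped ENNReal

-- Rearranging nonnegative double series is free in `ℝ≥0∞`; this transfers the result to `ℝ`.
lemma tsum_tsum_eq_toReal_of_nonneg {α β : Type*} {F : α → β → ℝ} (hF : ∀ a b, 0 ≤ F a b)
    (hfin : ∑' a, ∑' b, ENNReal.ofReal (F a b) ≠ ∞) :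
    ∑' a, ∑' b, F a b = (∑' a, ∑' b, ENNReal.ofReal (F a b)).toReal := by
  rw [ENNReal.tsum_toReal_eq fun a => ne_top_of_le_ne_top hfin (ENNReal.le_tsum a)]
  refine tsum_congr fun a => ?_
  rw [ENNReal.tsum_toReal_eq fun _ => ENNReal.ofReal_ne_top]
  exact tsum_congr fun b => (ENNReal.toReal_ofReal (hF a b)).symm

section Plateau

variable {d : ℕ} {J : ℕ → ℝ}

def plateau (Q : Finset (Fin d → ℤ)) (c : ℝ) : (Fin d → ℤ) → ℂ :=
  fun n => if n ∈ Q then (c : ℂ) else 0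

def escapeCount (Q : Finset (Fin d → ℤ)) (v : Fin d → ℤ) : ℕ :=
  (Q.filter fun n => n - v ∉ Q).card

lemma escapeCount_le_card (Q : Finset (Fin d → ℤ)) (v : Fin d → ℤ) :
    escapeCount Q v ≤ Q.card :=
  Finset.card_filter_le _ _

lemma norm_sq_plateau (Q : Finset (Fin d → ℤ)) (c : ℝ) (n : Fin d → ℤ) :
    ‖plateau Q c n‖ ^ 2 = if n ∈ Q then c ^ 2 else 0 := by
  unfold plateau
  split_ifs <;> simp

lemma memL2_plateau (Q : Finset (Fin d → ℤ)) (c : ℝ) : MemL2 d (plateau Q c) :=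
  summable_of_ne_finset_zero (s := Q) fun n hn => by rw [norm_sq_plateau, if_neg hn]

lemma mass_plateau (Q : Finset (Fin d → ℤ)) (c : ℝ) : mass d (plateau Q c) = c ^ 2 * Q.card := by
  rw [mass, tsum_eq_sum (s := Q) fun n hn => by rw [norm_sq_plateau, if_neg hn],
    Finset.sum_congr rfl fun n hn => by rw [norm_sq_plateau, if_pos hn]]
  simp [mul_comm]

lemma tsum_tsum_jbarSummand_mul_escape (hJ : ∀ k, 0 ≤ J k) (Q : Finset (Fin d → ℤ)) :
    ∑' n, ∑' m, ENNReal.ofReal (JbarSummand d J (n - m)) * (if n ∈ Q ∧ m ∉ Q then 1 else 0)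
      = ∑' v, ENNReal.ofReal (JbarSummand d J v * escapeCount Q v) := by
  calc _ = ∑' n, ∑' v, ENNReal.ofReal (JbarSummand d J v) *
        (if n ∈ Q ∧ n - v ∉ Q then 1 else 0) :=
        tsum_congr fun n => by
          rw [← (Equiv.subLeft n).tsum_eq]
          simp only [Equiv.subLeft_apply, sub_sub_cancel]
    _ = ∑' v, ENNReal.ofReal (JbarSummand d J v) *
        ∑' n, (if n ∈ Q ∧ n - v ∉ Q then 1 else 0) := by
        rw [ENNReal.tsum_comm]
        simp_rw [ENNReal.tsum_mul_left]
    _ = _ := tsum_congr fun v => by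
        rw [ENNReal.ofReal_mul (jbarSummand_nonneg hJ _), ENNReal.ofReal_natCast,
          tsum_eq_sum (s := Q) fun n hn => by simp [hn], Finset.sum_boole, escapeCount,
          Finset.filter_congr fun n hn => and_iff_right hn]

lemma pairing_plateau (hJ : ∀ k, 0 ≤ J k) (hJbar : Summable (JbarSummand d J))
    (Q : Finset (Fin d → ℤ)) (c : ℝ) :
    pairing d J (plateau Q c) = c ^ 2 * ∑' v, JbarSummand d J v * escapeCount Q v := by
  set S := ∑' v, JbarSummand d J v * escapeCount Q v
  set JS : (Fin d → ℤ) → ℝ≥0∞ := fun v => ENNReal.ofReal (JbarSummand d J v)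
  set χ : (Fin d → ℤ) → (Fin d → ℤ) → ℝ≥0∞ := fun n m => if n ∈ Q ∧ m ∉ Q then 1 else 0
  have hterm : ∀ n m, ENNReal.ofReal (JbarSummand d J (n - m) * ‖plateau Q c n - plateau Q c m‖ ^ 2)
      = ENNReal.ofReal (c ^ 2) * (JS (n - m) * χ n m + JS (n - m) * χ m n) := fun n m => by
    rw [ENNReal.ofReal_mul (jbarSummand_nonneg hJ _)]
    by_cases hn : n ∈ Q <;> by_cases hm : m ∈ Q <;> simp [plateau, hn, hm, χ, JS, mul_comm]
  -- The kernel is even, so both halves of the symmetric difference contribute equally.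
  have hswap : ∑' n, ∑' m, JS (n - m) * χ m n = ∑' n, ∑' m, JS (n - m) * χ n m := by
    rw [ENNReal.tsum_comm]
    simp only [JS, jbarSummand_sub_comm (J := J)]
  have hsummable : Summable fun v => JbarSummand d J v * escapeCount Q v :=
    Summable.of_nonneg_of_le (fun v => mul_nonneg (jbarSummand_nonneg hJ v) (Nat.cast_nonneg _))
      (fun v => mul_le_mul_of_nonneg_left (Nat.cast_le.mpr (escapeCount_le_card Q v))
        (jbarSummand_nonneg hJ v)) (hJbar.mul_right (Q.card : ℝ))
  have hS : 0 ≤ S := tsum_nonneg fun v => mul_nonneg (jbarSummand_nonneg hJ v) (Nat.cast_nonneg _)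
  have hdouble : ∑' n, ∑' m,
      ENNReal.ofReal (JbarSummand d J (n - m) * ‖plateau Q c n - plateau Q c m‖ ^ 2)
      = ENNReal.ofReal (2 * c ^ 2 * S) := by
    rw [show 2 * c ^ 2 * S = c ^ 2 * (2 * S) by ring, ENNReal.ofReal_mul (sq_nonneg c),
      ENNReal.ofReal_mul zero_le_two, ENNReal.ofReal_ofNat, ENNReal.ofReal_tsum_of_nonneg
        (fun v => mul_nonneg (jbarSummand_nonneg hJ v) (Nat.cast_nonneg _)) hsummable]
    simp_rw [hterm, ENNReal.tsum_mul_left, ENNReal.tsum_add, hswap, JS, χ,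
      tsum_tsum_jbarSummand_mul_escape hJ Q, two_mul]
  rw [pairing_eq_tsum_jbarSummand, tsum_tsum_eq_toReal_of_nonneg
      (fun n m => mul_nonneg (jbarSummand_nonneg hJ _) (sq_nonneg _))
      (hdouble ▸ ENNReal.ofReal_ne_top), hdouble, ENNReal.toReal_ofReal (by positivity)]
  ring

end Plateau

section Cube

variable {d : ℕ} {J : ℕ → ℝ} {ν : ℝ}

def cube (d L : ℕ) : Finset (Fin d → ℤ) :=
  Fintype.piFinset fun _ => Finset.Ico (0 : ℤ) L

lemma card_cube (d L : ℕ) : (cube d L).card = L ^ d := by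
  simp [cube, Fintype.card_piFinset]

lemma escapeCount_cube_le {L : ℕ} (v : Fin d → ℤ) (hL : 2 * latNorm v ≤ L) :
    (escapeCount (cube d L) v : ℝ) ≤ (L : ℝ) ^ d - ((L : ℝ) - 2 * latNorm v) ^ d := by
  set K := latNorm v
  -- A shift of norm `K` keeps the inner cube `[K, L - K)^d` inside `[0, L)^d`.
  set I : Finset (Fin d → ℤ) := Fintype.piFinset fun _ => Finset.Ico (K : ℤ) (L - K)
  have hI : I ⊆ cube d L := by
    intro n hn
    simp only [cube, I, Fintype.mem_piFinset, Finset.mem_Ico] at hn ⊢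
    exact fun i => ⟨by linarith [(hn i).1], by linarith [(hn i).2]⟩
  have hcardI : I.card = (L - 2 * K) ^ d := by
    simp only [I, Fintype.card_piFinset, Int.card_Ico, Finset.prod_const, Finset.card_univ,
      Fintype.card_fin]
    congr 1
    omega
  have hescape : (cube d L).filter (fun n => n - v ∉ cube d L) ⊆ cube d L \ I := by
    intro n hn
    rw [Finset.mem_filter] at hn
    refine Finset.mem_sdiff.mpr ⟨hn.1, fun hnI => hn.2 ?_⟩
    simp only [cube, I, Fintype.mem_piFinset, Finset.mem_Ico, Pi.sub_apply] at hnI ⊢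
    intro i
    have hvi := natAbs_le_latNorm v i
    have := hnI i
    omega
  calc (escapeCount (cube d L) v : ℝ) ≤ (cube d L \ I).card :=
        Nat.cast_le.mpr (Finset.card_le_card hescape)
    _ = (L : ℝ) ^ d - ((L : ℝ) - 2 * K) ^ d := by
        rw [Finset.card_sdiff_of_subset hI, Nat.cast_sub (Finset.card_le_card hI), card_cube,
          hcardI]
        push_cast [hL]
        rfl

lemma tendsto_escapeCount_cube_div (v : Fin d → ℤ) :
    Tendsto (fun L : ℕ => (escapeCount (cube d L) v : ℝ) / (L : ℝ) ^ d) atTop (𝓝 0) := by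
  set K := latNorm v
  have hlim : Tendsto (fun L : ℕ => 1 - (1 - 2 * (K : ℝ) / L) ^ d) atTop (𝓝 0) := by
    have := (tendsto_const_nhds (x := (1 : ℝ))).sub
      (((tendsto_const_nhds (x := (1 : ℝ))).sub
        (tendsto_const_div_atTop_nhds_zero_nat (2 * (K : ℝ)))).pow d)
    simpa using this
  refine squeeze_zero' (Eventually.of_forall fun L => by positivity)
    (eventually_atTop.2 ⟨max 1 (2 * K), fun L hL => ?_⟩) hlim
  have hLpos : (0 : ℝ) < L := by exact_mod_cast (le_of_max_le_left hL)
  rw [div_le_iff₀ (by positivity), sub_mul, one_mul, ← mul_pow, sub_mul, one_mul,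
    div_mul_cancel₀ _ hLpos.ne']
  exact escapeCount_cube_le v (le_of_max_le_right hL)

def cubeState (d : ℕ) (ν : ℝ) (L : ℕ) : (Fin d → ℤ) → ℂ :=
  plateau (cube d L) (Real.sqrt (ν / (L : ℝ) ^ d))

lemma mass_cubeState (hν : 0 ≤ ν) {L : ℕ} (hL : L ≠ 0) : mass d (cubeState d ν L) = ν := by
  rw [cubeState, mass_plateau, Real.sq_sqrt (by positivity), card_cube]
  push_cast
  field_simp

lemma tendsto_pairing_cubeState (hJ : ∀ k, 0 ≤ J k) (hJbar : Summable (JbarSummand d J))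
    (hν : 0 ≤ ν) : Tendsto (fun L => pairing d J (cubeState d ν L)) atTop (𝓝 0) := by
  have heq : ∀ L : ℕ, pairing d J (cubeState d ν L)
      = ν * ∑' v, JbarSummand d J v * (escapeCount (cube d L) v / (L : ℝ) ^ d) := fun L => by
    rw [cubeState, pairing_plateau hJ hJbar, Real.sq_sqrt (by positivity), ← tsum_mul_left,
      ← tsum_mul_left]
    exact tsum_congr fun v => by ring
  have hbound : ∀ (L : ℕ) v,
      ‖JbarSummand d J v * (escapeCount (cube d L) v / (L : ℝ) ^ d)‖ ≤ JbarSummand d J v := by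
    intro L v
    rw [Real.norm_of_nonneg (by positivity [jbarSummand_nonneg hJ v])]
    refine mul_le_of_le_one_right (jbarSummand_nonneg hJ v) (div_le_one_of_le₀ ?_ (by positivity))
    exact_mod_cast (escapeCount_le_card _ v).trans (card_cube d L).le
  have hlim := tendsto_tsum_of_dominated_convergence hJbar
    (fun v => (tendsto_escapeCount_cube_div v).const_mul (JbarSummand d J v))
    (Eventually.of_forall hbound)
  simp_rw [heq]
  simpa using hlim.const_mul ν

end Cube

section GroundState

variable {d : ℕ} {J : ℕ → ℝ} {p ν : ℝ}

lemma Ifun_nonpos (hp : 1 ≤ p) (hJ : ∀ k, 0 ≤ J k) (hJbar : Summable (JbarSummand d J))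
    (hν : 0 ≤ ν) : Ifun d J p ν ≤ 0 := by
  have hlim := (tendsto_pairing_cubeState hJ hJbar hν).const_mul (1 / 2)
  rw [mul_zero] at hlim
  refine ge_of_tendsto hlim (eventually_atTop.2 ⟨1, fun L hL => ?_⟩)
  have hmem : energy d J p (cubeState d ν L) ∈
      {x | ∃ q, MemL2 d q ∧ mass d q = ν ∧ energy d J p q = x} :=
    ⟨_, memL2_plateau _ _, mass_cubeState hν (by omega), rfl⟩
  exact (csInf_le (energy_bddBelow hp hJ ν) hmem).trans (energy_le_half_pairing (by linarith) _)

lemma zero_le_Ifun_iff (hp : 1 ≤ p) (hJ : ∀ k, 0 ≤ J k) (hν : 0 ≤ ν) :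
    0 ≤ Ifun d J p ν ↔ ∀ q, MemL2 d q → mass d q = ν → 0 ≤ energy d J p q := by
  have hne : {x | ∃ q, MemL2 d q ∧ mass d q = ν ∧ energy d J p q = x}.Nonempty :=
    ⟨_, cubeState d ν 1, memL2_plateau _ _, mass_cubeState hν one_ne_zero, rfl⟩
  rw [Ifun, le_csInf_iff (energy_bddBelow hp hJ ν) hne]
  exact ⟨fun h q hq hmass => h _ ⟨q, hq, hmass, rfl⟩,
    fun h _ ⟨q, hq, hmass, hx⟩ => hx ▸ h q hq hmass⟩

lemma gagliardoNirenberg_of_forall_mass_eq (hp : 1 < p) (hν : 0 < ν)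
    (h : ∀ q, MemL2 d q → mass d q = ν → GagliardoNirenberg d J p ν q)
    {q : (Fin d → ℤ) → ℂ} (hq : MemL2 d q) : GagliardoNirenberg d J p ν q := by
  rcases (mass_nonneg q).eq_or_lt with h0 | hpos
  · exact gagliardoNirenberg_of_mass_eq_zero hp hq h0.symm
  have hc : 0 < Real.sqrt (ν / mass d q) := Real.sqrt_pos.2 (div_pos hν hpos)
  rw [← gagliardoNirenberg_smul_iff hc]
  refine h _ (memL2_smul _ hq) ?_
  rw [mass_smul, Real.sq_sqrt (div_pos hν hpos).le, div_mul_cancel₀ _ hpos.ne']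

end GroundState

theorem stmt1_general (d : ℕ) (p : ℝ) (hp : 1 < p) (J : ℕ → ℝ)
    (hJpos : ∀ k, 0 ≤ J k) (hJbar : Summable (JbarSummand d J))
    (ν : ℝ) (hν : 0 < ν) :
    Ifun d J p ν = 0 ↔
      ∀ q : (Fin d → ℤ) → ℂ, MemL2 d q →
        ppot d p q ≤ ((p + 1) / 2) * ν ^ (-(p - 1) / 2) * (mass d q) ^ ((p - 1) / 2) *
          pairing d J q := by
  change _ ↔ ∀ q, MemL2 d q → GagliardoNirenberg d J p ν q
  rw [← (Ifun_nonpos hp.le hJpos hJbar hν.le).ge_iff_eq, zero_le_Ifun_iff hp.le hJpos hν.le]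
  have henergy : ∀ q, mass d q = ν → (GagliardoNirenberg d J p ν q ↔ 0 ≤ energy d J p q) :=
    fun q => gagliardoNirenberg_iff_energy_nonneg hν (by linarith)
  exact ⟨fun h q hq => gagliardoNirenberg_of_forall_mass_eq hp hν
      (fun q' hq' hmass => (henergy q' hmass).2 (h q' hq' hmass)) hq,
    fun h q hq hmass => (henergy q hmass).1 (h q hq)⟩

theorem stmt1 (d : ℕ) (hd : 1 ≤ d) (p : ℝ) (hp : 1 < p) (J : ℕ → ℝ)
    (hJpos : ∀ k, 0 ≤ J k) (hJbar : Summable (JbarSummand d J))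
    (ν : ℝ) (hν : 0 < ν) :
    Ifun d J p ν = 0 ↔
      ∀ q : (Fin d → ℤ) → ℂ, MemL2 d q →
        ppot d p q ≤ ((p + 1) / 2) * ν ^ (-(p - 1) / 2) * (mass d q) ^ ((p - 1) / 2) *
          pairing d J q :=
  stmt1_general d p hp J hJpos hJbar ν hν
end
end

section
/- Assume J̄ < ∞ and that J is of order α ∈ (0,∞). Let q ∈ ℓ²(Z^d) have nonnegative entries, q ≠ 0, and satisfy −ω q_n = (Lq)_n − (q_n)^p for all n ∈ Z^d, for some ω > 0. Then for every ε > 0 there is no constant C > 0 with q_n ≤ C (1 + |n|)^{−(d+α+ε)} for all n ∈ Z^d; that is, the decay rate d+α is sharp. -/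
open scoped BigOperators
open Filter Topology

noncomputable section

/-- The operator `L` applied to a real-valued sequence:
`(Lq)_n = Σ_{m ≠ n} J_{|n-m|} (q_n - q_m)`. -/
def LopR (d : ℕ) (J : ℕ → ℝ) (q : (Fin d → ℤ) → ℝ) (n : Fin d → ℤ) : ℝ :=
  ∑' m : Fin d → ℤ, if m = n then 0 else J (latNorm (n - m)) * (q n - q m)

/-!
Writing `(Lq)_n = J̄ q_n - Σ_m J_{|n-m|} q_m`, the equation gives
`Σ_m J_{|n-m|} q_m = (J̄ + ω) q_n - q_n^p ≤ (J̄ + ω) q_n`, so a single term of the sum is controlled: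
`J_{|n-m|} q_m ≤ (J̄ + ω) q_n`. Fix `n₀` with `q_{n₀} > 0` and move `n` along a coordinate axis,
`n = n₀ + k e₀`. Then `J_k q_{n₀} ≤ (J̄ + ω) q_n`, and a decay bound of order `d + α + ε` would force
`k^{d+α} J_k = O(k^{-ε}) → 0`, contradicting that `J` has order `α`.
-/

theorem latNorm_eq_norm {d : ℕ} (m : Fin d → ℤ) : (latNorm m : ℝ) = ‖m‖ := by
  rw [Pi.norm_def, latNorm, ← NNReal.coe_natCast, Nat.cast_finsetSup]
  simp only [NNReal.natCast_natAbs]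

theorem latNorm_single {d : ℕ} (i : Fin d) (k : ℕ) : latNorm (Pi.single i (k : ℤ)) = k := by
  have h : (latNorm (Pi.single i (k : ℤ)) : ℝ) = k := by
    rw [latNorm_eq_norm, Pi.norm_single, Int.norm_natCast]
  exact_mod_cast h

theorem sub_latNorm_le_latNorm_add_single {d : ℕ} (n : Fin d → ℤ) (i : Fin d) (k : ℕ) :
    (k : ℝ) - latNorm n ≤ latNorm (n + Pi.single i (k : ℤ)) := by
  have h := norm_sub_le (n + Pi.single i (k : ℤ)) n
  rw [add_sub_cancel_left, ← latNorm_eq_norm, latNorm_single, ← latNorm_eq_norm,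
    ← latNorm_eq_norm] at h
  linarith

theorem one_add_rpow_neg_le {s N x k : ℝ} (hs : 0 ≤ s) (hk0 : 0 < k) (hk : 2 * N ≤ k)
    (hx : k - N ≤ x) : (1 + x) ^ (-s) ≤ 2 ^ s * k ^ (-s) := by
  calc (1 + x) ^ (-s) ≤ (k / 2) ^ (-s) :=
        Real.rpow_le_rpow_of_nonpos (by positivity) (by linarith) (by linarith)
    _ = 2 ^ s * k ^ (-s) := by
      rw [Real.div_rpow hk0.le zero_le_two, Real.rpow_neg zero_le_two, div_inv_eq_mul, mul_comm]

section Convolution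

variable {d : ℕ} {J : ℕ → ℝ} {q : (Fin d → ℤ) → ℝ} {C : ℝ}

theorem JbarSummand_nonneg (hJ : ∀ k, 0 ≤ J k) (m : Fin d → ℤ) : 0 ≤ JbarSummand d J m := by
  unfold JbarSummand
  split_ifs
  exacts [le_rfl, hJ _]

theorem summable_JbarSummand_sub_mul (hJbar : Summable (JbarSummand d J)) (hq : ∀ m, |q m| ≤ C)
    (n : Fin d → ℤ) : Summable fun m => JbarSummand d J (n - m) * q m :=
  ((hJbar.comp_injective sub_right_injective).abs.mul_right C).of_norm_bounded fun m => by
    rw [Real.norm_eq_abs, abs_mul]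
    exact mul_le_mul_of_nonneg_left (hq m) (abs_nonneg _)

theorem LopR_eq_sub_tsum (hJbar : Summable (JbarSummand d J)) (hq : ∀ m, |q m| ≤ C)
    (n : Fin d → ℤ) :
    LopR d J q n = Jbar d J * q n - ∑' m, JbarSummand d J (n - m) * q m := by
  have hshift : Summable fun m => JbarSummand d J (n - m) :=
    hJbar.comp_injective sub_right_injective
  have hterm : ∀ m, (if m = n then 0 else J (latNorm (n - m)) * (q n - q m)) =
      JbarSummand d J (n - m) * q n - JbarSummand d J (n - m) * q m := by
    intro m
    by_cases h : m = n
    · simp [h, JbarSummand]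
    · rw [if_neg h, JbarSummand, if_neg (sub_ne_zero.mpr (Ne.symm h))]
      ring
  have htotal : ∑' m, JbarSummand d J (n - m) = Jbar d J :=
    (Equiv.subLeft n).tsum_eq (JbarSummand d J)
  rw [LopR, tsum_congr hterm,
    (hshift.mul_right (q n)).tsum_sub (summable_JbarSummand_sub_mul hJbar hq n),
    tsum_mul_right, htotal]

theorem J_latNorm_sub_mul_le_of_eigen (hJ : ∀ k, 0 ≤ J k) (hJbar : Summable (JbarSummand d J))
    (hq0 : ∀ m, 0 ≤ q m) (hqC : ∀ m, q m ≤ C) {ω p : ℝ} {n : Fin d → ℤ}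
    (heig : -ω * q n = LopR d J q n - q n ^ p) {m : Fin d → ℤ} (hmn : m ≠ n) :
    J (latNorm (n - m)) * q m ≤ (Jbar d J + ω) * q n := by
  have hq : ∀ m, |q m| ≤ C := fun m => (abs_of_nonneg (hq0 m)).le.trans (hqC m)
  have hsingle : JbarSummand d J (n - m) * q m ≤ ∑' m', JbarSummand d J (n - m') * q m' :=
    (summable_JbarSummand_sub_mul hJbar hq n).le_tsum m
      fun m' _ => mul_nonneg (JbarSummand_nonneg hJ _) (hq0 m')
  rw [JbarSummand, if_neg (sub_ne_zero.mpr hmn.symm)] at hsingle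
  rw [LopR_eq_sub_tsum hJbar hq] at heig
  linarith [Real.rpow_nonneg (hq0 n) p]

theorem J_mul_le_of_eigen_add_single (hJ : ∀ k, 0 ≤ J k) (hJbar : Summable (JbarSummand d J))
    (hq0 : ∀ m, 0 ≤ q m) (hqC : ∀ m, q m ≤ C) {ω p : ℝ}
    (heig : ∀ n, -ω * q n = LopR d J q n - q n ^ p) (n : Fin d → ℤ) (i : Fin d) {k : ℕ}
    (hk : k ≠ 0) : J k * q n ≤ (Jbar d J + ω) * q (n + Pi.single i (k : ℤ)) := by
  have hne : n ≠ n + Pi.single i (k : ℤ) := by simpa using hk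
  simpa [latNorm_single] using J_latNorm_sub_mul_le_of_eigen hJ hJbar hq0 hqC (heig _) hne

theorem eventually_J_mul_le_rpow_of_decay (hJ : ∀ k, 0 ≤ J k)
    (hJbar : Summable (JbarSummand d J)) (hq0 : ∀ m, 0 ≤ q m) {ω p s : ℝ} (hω : 0 ≤ ω)
    (heig : ∀ n, -ω * q n = LopR d J q n - q n ^ p) (hs : 0 ≤ s) (hC : 0 ≤ C)
    (hdecay : ∀ n, q n ≤ C * (1 + (latNorm n : ℝ)) ^ (-s)) (i : Fin d) (n₀ : Fin d → ℤ) :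
    ∀ᶠ k : ℕ in atTop, J k * q n₀ ≤ ((Jbar d J + ω) * C * 2 ^ s) * (k : ℝ) ^ (-s) := by
  have hqC : ∀ n, q n ≤ C := fun n => (hdecay n).trans <| mul_le_of_le_one_right hC <|
    Real.rpow_le_one_of_one_le_of_nonpos (by simp) (by linarith)
  have hJω : 0 ≤ Jbar d J + ω := add_nonneg (tsum_nonneg (JbarSummand_nonneg hJ)) hω
  filter_upwards [eventually_ge_atTop (2 * latNorm n₀ + 1)] with k hk
  have hk0 : (0 : ℝ) < k := by exact_mod_cast (by omega : 0 < k)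
  have hk2 : 2 * (latNorm n₀ : ℝ) ≤ k := by exact_mod_cast (by omega : 2 * latNorm n₀ ≤ k)
  set n : Fin d → ℤ := n₀ + Pi.single i (k : ℤ)
  have hn : (1 + (latNorm n : ℝ)) ^ (-s) ≤ 2 ^ s * (k : ℝ) ^ (-s) :=
    one_add_rpow_neg_le hs hk0 hk2 (sub_latNorm_le_latNorm_add_single n₀ i k)
  calc J k * q n₀ ≤ (Jbar d J + ω) * q n :=
        J_mul_le_of_eigen_add_single hJ hJbar hq0 hqC heig n₀ i (by omega)
    _ ≤ (Jbar d J + ω) * (C * (2 ^ s * (k : ℝ) ^ (-s))) := by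
        gcongr
        exact (hdecay n).trans (by gcongr)
    _ = ((Jbar d J + ω) * C * 2 ^ s) * (k : ℝ) ^ (-s) := by ring

end Convolution

theorem nonpos_of_tendsto_rpow_mul_of_le {f : ℕ → ℝ} {a s K A : ℝ} (has : a < s)
    (hf : ∀ᶠ k in atTop, f k ≤ K * (k : ℝ) ^ (-s))
    (hlim : Tendsto (fun k : ℕ => (k : ℝ) ^ a * f k) atTop (𝓝 A)) : A ≤ 0 := by
  have hzero : Tendsto (fun k : ℕ => K * (k : ℝ) ^ (a - s)) atTop (𝓝 0) := by
    simpa [neg_sub] using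
      ((tendsto_rpow_neg_atTop (sub_pos.2 has)).comp tendsto_natCast_atTop_atTop).const_mul K
  refine le_of_tendsto_of_tendsto hlim hzero ?_
  filter_upwards [hf, eventually_gt_atTop 0] with k hk hk0
  have hk0' : (0 : ℝ) < k := by exact_mod_cast hk0
  calc (k : ℝ) ^ a * f k ≤ (k : ℝ) ^ a * (K * (k : ℝ) ^ (-s)) := by gcongr
    _ = K * (k : ℝ) ^ (a - s) := by rw [sub_eq_add_neg, Real.rpow_add hk0']; ring

theorem stmt4_general (d : ℕ) (hd : 1 ≤ d) (p : ℝ) (J : ℕ → ℝ)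
    (hJpos : ∀ k, 0 ≤ J k) (hJbar : Summable (JbarSummand d J))
    (α : ℝ) (hα : 0 < α)
    (horder : ∃ A : ℝ, 0 < A ∧
      Tendsto (fun k : ℕ => (k : ℝ) ^ ((d : ℝ) + α) * J k) atTop (𝓝 A))
    (q : (Fin d → ℤ) → ℝ) (hqpos : ∀ n, 0 ≤ q n) (hqne : q ≠ 0)
    (ω : ℝ) (hω : 0 < ω)
    (heig : ∀ n, -ω * q n = LopR d J q n - q n ^ p) :
    ∀ ε : ℝ, 0 < ε →
      ¬ ∃ C : ℝ, 0 < C ∧ ∀ n : Fin d → ℤ,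
        q n ≤ C * (1 + (latNorm n : ℝ)) ^ (-((d : ℝ) + α + ε)) := by
  rintro ε hε ⟨C, hC, hdecay⟩
  obtain ⟨A, hA, hlim⟩ := horder
  obtain ⟨n₀, hn₀⟩ := Function.ne_iff.mp hqne
  have hqn₀ : 0 < q n₀ := (hqpos n₀).lt_of_ne' hn₀
  have hbound := eventually_J_mul_le_rpow_of_decay hJpos hJbar hqpos hω.le heig
    (by positivity) hC.le hdecay ⟨0, hd⟩ n₀
  have hlim' : Tendsto (fun k : ℕ => (k : ℝ) ^ ((d : ℝ) + α) * (J k * q n₀)) atTop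
      (𝓝 (A * q n₀)) := by
    simpa only [mul_assoc] using hlim.mul_const (q n₀)
  exact (mul_pos hA hqn₀).not_ge
    (nonpos_of_tendsto_rpow_mul_of_le (by linarith) hbound hlim')

theorem stmt4 (d : ℕ) (hd : 1 ≤ d) (p : ℝ) (hp : 1 < p) (J : ℕ → ℝ)
    (hJpos : ∀ k, 0 ≤ J k) (hJbar : Summable (JbarSummand d J))
    (α : ℝ) (hα : 0 < α)
    (horder : ∃ A : ℝ, 0 < A ∧
      Tendsto (fun k : ℕ => (k : ℝ) ^ ((d : ℝ) + α) * J k) atTop (𝓝 A))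
    (q : (Fin d → ℤ) → ℝ) (hqpos : ∀ n, 0 ≤ q n) (hqne : q ≠ 0)
    (hqL2 : Summable fun n : Fin d → ℤ => q n ^ 2)
    (ω : ℝ) (hω : 0 < ω)
    (heig : ∀ n, -ω * q n = LopR d J q n - q n ^ p) :
    ∀ ε : ℝ, 0 < ε →
      ¬ ∃ C : ℝ, 0 < C ∧ ∀ n : Fin d → ℤ,
        q n ≤ C * (1 + (latNorm n : ℝ)) ^ (-((d : ℝ) + α + ε)) :=
  stmt4_general d hd p J hJpos hJbar α hα horder q hqpos hqne ω hω heig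
end
end
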